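/- Analysis is invariant under renaming of quantity names: let f be any function on names and let map f be its lift to named quantities (map f (Named n) = Named (f n), map f Noname = Noname). For every unit expression e and environment τ, if 𝒩ℰ⟦e⟧τ is defined and equals q, then 𝒩ℰ⟦e⟧(map f ∘ τ) is defined and equals map f q. -/

import Mathlib

/-- A named quantity: either `Named n` for a name (string) `n`, or `Noname`. -/
inductive NamedQ where
  | Named : String → NamedQ
  | Noname : NamedQ
deriving DecidableEq

/-- The partial operation ◇ on named quantities, modelled via `Option`:
`none` means undefined. -/
def diamond : NamedQ → NamedQ → Option NamedQ
  | .Named n₁, .Named n₂ => if n₁ = n₂ then some (.Named n₁) else none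
  | .Named n, .Noname => some (.Named n)
  | .Noname, .Named n => some (.Named n)
  | .Noname, .Noname => some .Noname

/-- The total operation △ on named quantities: always returns `Noname`. -/
def triangle : NamedQ → NamedQ → NamedQ := fun _ _ => .Noname

/-- Unit expressions over a type `V` of variables: a variable, a sum, a scalar
multiple by a real constant, or a product. -/
inductive UExp (V : Type) where
  | var : V → UExp V
  | add : UExp V → UExp V → UExp V
  | smul : ℝ → UExp V → UExp V
  | mul : UExp V → UExp V → UExp V

/-- A unit expression is multiplication-free if it contains no product. -/
def UExp.mulFree {V : Type} : UExp V → Prop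
  | .var _ => True
  | .add e₁ e₂ => e₁.mulFree ∧ e₂.mulFree
  | .smul _ e => e.mulFree
  | .mul _ _ => False

/-- The list of variables occurring in a unit expression. -/
def UExp.vars {V : Type} : UExp V → List V
  | .var v => [v]
  | .add e₁ e₂ => e₁.vars ++ e₂.vars
  | .smul _ e => e.vars
  | .mul e₁ e₂ => e₁.vars ++ e₂.vars

/-- The partial analysis function 𝒩ℰ: given an environment `τ` binding
variables to named quantities, compute the named quantity of a unit
expression (`none` = undefined). -/
def NE {V : Type} (τ : V → NamedQ) : UExp V → Option NamedQ
  | .var v => some (τ v)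
  | .add e₁ e₂ => do
      let q₁ ← NE τ e₁
      let q₂ ← NE τ e₂
      diamond q₁ q₂
  | .smul _ e => NE τ e
  | .mul e₁ e₂ => do
      let q₁ ← NE τ e₁
      let q₂ ← NE τ e₂
      pure (triangle q₁ q₂)

/-- The lift of a function on names to named quantities. -/
def NamedQ.map (f : String → String) : NamedQ → NamedQ
  | .Named n => .Named (f n)
  | .Noname => .Noname

theorem NamedQ.map_diamond (f : String → String) {a b q : NamedQ} (h : diamond a b = some q) :
    diamond (a.map f) (b.map f) = some (q.map f) := by
  match a, b, h with
  | .Named n₁, .Named n₂, h =>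
    obtain ⟨rfl, rfl⟩ : n₁ = n₂ ∧ NamedQ.Named n₁ = q := by simpa [diamond] using h
    simp [diamond, NamedQ.map]
  | .Named _, .Noname, h | .Noname, .Named _, h | .Noname, .Noname, h =>
    cases h
    rfl

theorem NE_add_eq_some_iff {V : Type} {τ : V → NamedQ} {e₁ e₂ : UExp V} {q : NamedQ} :
    NE τ (.add e₁ e₂) = some q ↔
      ∃ q₁ q₂, NE τ e₁ = some q₁ ∧ NE τ e₂ = some q₂ ∧ diamond q₁ q₂ = some q := by
  simp [NE, Option.bind_eq_some_iff]

theorem NE_mul_eq_some_iff {V : Type} {τ : V → NamedQ} {e₁ e₂ : UExp V} {q : NamedQ} :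
    NE τ (.mul e₁ e₂) = some q ↔
      (∃ q₁ q₂, NE τ e₁ = some q₁ ∧ NE τ e₂ = some q₂) ∧ q = .Noname := by
  simp only [NE, Option.bind_eq_bind, Option.bind_eq_some_iff, triangle, pure, Option.some_inj]
  grind

/-- analysis is invariant under renaming of quantity names:
if `𝒩ℰ⟦e⟧τ = q` then `𝒩ℰ⟦e⟧(map f ∘ τ) = map f q`. -/
theorem ne_rename {V : Type} (f : String → String) (e : UExp V)
    (τ : V → NamedQ) (q : NamedQ) (h : NE τ e = some q) :
    NE (NamedQ.map f ∘ τ) e = some (NamedQ.map f q) := by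
  induction e generalizing q with
  | var _ => cases h; rfl
  | add e₁ e₂ ih₁ ih₂ =>
    obtain ⟨q₁, q₂, h₁, h₂, hq⟩ := NE_add_eq_some_iff.mp h
    exact NE_add_eq_some_iff.mpr ⟨_, _, ih₁ q₁ h₁, ih₂ q₂ h₂, NamedQ.map_diamond f hq⟩
  | smul _ e ih => exact ih q h
  | mul e₁ e₂ ih₁ ih₂ =>
    obtain ⟨⟨q₁, q₂, h₁, h₂⟩, rfl⟩ := NE_mul_eq_some_iff.mp h
    exact NE_mul_eq_some_iff.mpr ⟨⟨_, _, ih₁ q₁ h₁, ih₂ q₂ h₂⟩, rfl⟩
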